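/- (Theorem 1(iii)) Suppose X_1, …, X_n affinely span ℝ^d. Then the composite similarity mapping h : Θ_n → ℝ^d, h(θ) = θ̃ + (1 + l(θ)/(2n))(θ − θ̃), is a bijection from Θ_n onto all of ℝ^d. -/

import Mathlib

noncomputable section

/-- The set of empirical likelihood weight vectors for `θ`:
`W(θ) = {w : wᵢ ≥ 0, Σ wᵢ = 1, Σ wᵢ Xᵢ = θ}`. -/
def Wset (n d : ℕ) (X : Fin n → EuclideanSpace ℝ (Fin d))
    (θ : EuclideanSpace ℝ (Fin d)) : Set (Fin n → ℝ) :=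
  {w | (∀ i, 0 ≤ w i) ∧ ∑ i, w i = 1 ∧ ∑ i, w i • X i = θ}

/-- The empirical likelihood ratio `R(θ) = sup {∏ n·wᵢ : w ∈ W(θ)}` (the sup over
the empty set is `0`, since `Real.sSup ∅ = 0`). -/
def elR (n d : ℕ) (X : Fin n → EuclideanSpace ℝ (Fin d))
    (θ : EuclideanSpace ℝ (Fin d)) : ℝ :=
  sSup ((fun w => ∏ i, (n : ℝ) * w i) '' Wset n d X θ)

/-- The empirical log-likelihood ratio `l(θ) = -2 log R(θ)`. -/
def elln (n d : ℕ) (X : Fin n → EuclideanSpace ℝ (Fin d))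
    (θ : EuclideanSpace ℝ (Fin d)) : ℝ :=
  -2 * Real.log (elR n d X θ)

/-- The sample mean `θ̃ = n⁻¹ Σ Xᵢ`. -/
def sampleMean (n d : ℕ) (X : Fin n → EuclideanSpace ℝ (Fin d)) :
    EuclideanSpace ℝ (Fin d) :=
  (n : ℝ)⁻¹ • ∑ i, X i

/-- The composite similarity mapping `h(θ) = θ̃ + (1 + l(θ)/(2n))(θ - θ̃)`. -/
def csm (n d : ℕ) (X : Fin n → EuclideanSpace ℝ (Fin d))
    (θ : EuclideanSpace ℝ (Fin d)) : EuclideanSpace ℝ (Fin d) :=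
  sampleMean n d X + (1 + elln n d X θ / (2 * n)) • (θ - sampleMean n d X)

/-!
The empirical likelihood ratio `R` is log-concave on `Θₙ`: if `w₀, w₁` are maximising weights at
`θ₀, θ₁`, then `a w₀ + b w₁` is admissible at `a θ₀ + b θ₁`, and weighted AM-GM applies factor by
factor. Hence `l = -2 log R` is convex, nonnegative, and zero at the sample mean `θ̃`.

On the ray `θ̃ + s • u` the map `h` acts by `s ↦ s (1 + l(θ̃ + s • u) / (2n))`. Convexity makes
`l(θ̃ + s • u) / s` nondecreasing, so this profile is strictly increasing, which gives injectivity.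
For surjectivity, the profile is continuous, vanishes at `0` and tends to `∞` where the ray leaves
`Θₙ`: a supporting hyperplane at the exit point bounds some weight `w_j`, hence `R`, by a multiple
of the distance to that point. The intermediate value theorem finishes the argument.
-/

open Filter Topology

lemma Real.prod_le_one_of_sum_eq_card {ι : Type*} [Fintype ι] {z : ι → ℝ} (h0 : ∀ i, 0 ≤ z i)
    (hsum : ∑ i, z i = Fintype.card ι) : ∏ i, z i ≤ 1 :=
  calc ∏ i, z i ≤ ∏ i, Real.exp (z i - 1) :=
        Finset.prod_le_prod (fun i _ => h0 i) fun i _ => by linarith [Real.add_one_le_exp (z i - 1)]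
    _ = 1 := by simp [← Real.exp_sum, Finset.sum_sub_distrib, hsum]

lemma exists_pos_add_smul_mem_of_mem_interior {E : Type*} [AddCommGroup E] [TopologicalSpace E]
    [Module ℝ E] [ContinuousAdd E] [ContinuousSMul ℝ E] {s : Set E} {x : E}
    (hx : x ∈ interior s) (v : E) : ∃ t : ℝ, 0 < t ∧ x + t • v ∈ s := by
  have hline : Tendsto (fun t : ℝ => x + t • v) (𝓝[>] 0) (𝓝 x) :=
    ((by fun_prop : Continuous fun t : ℝ => x + t • v).tendsto' 0 x (by simp)).mono_left
      nhdsWithin_le_nhds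
  obtain ⟨t, ht, hts⟩ := ((hline.eventually (mem_interior_iff_mem_nhds.mp hx)).and
    self_mem_nhdsWithin).exists
  exact ⟨t, hts, ht⟩

lemma exists_first_exit {α : Type*} [TopologicalSpace α] {U : Set α} (hU : IsOpen U)
    {γ : ℝ → α} (hγ : Continuous γ) (h0 : γ 0 ∈ U) (h1 : γ 1 ∉ U) :
    ∃ b > 0, γ b ∉ U ∧ ∀ s ∈ Set.Ico 0 b, γ s ∈ U := by
  have hS : IsCompact (Set.Icc (0 : ℝ) 1 ∩ γ ⁻¹' Uᶜ) :=
    isCompact_Icc.inter_right (hU.isClosed_compl.preimage hγ)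
  obtain ⟨b, ⟨⟨hb0, hb1⟩, hbU⟩, hmin⟩ := hS.exists_isLeast ⟨1, ⟨by simp, h1⟩⟩
  refine ⟨b, hb0.lt_of_ne ?_, hbU, fun s hs => ?_⟩
  · rintro rfl
    exact hbU h0
  · by_contra hsU
    exact (hmin ⟨⟨hs.1, by linarith [hs.2]⟩, hsU⟩).not_gt hs.2

def radialProfile (n d : ℕ) (X : Fin n → EuclideanSpace ℝ (Fin d))
    (u : EuclideanSpace ℝ (Fin d)) (s : ℝ) : ℝ :=
  s * (1 + elln n d X (sampleMean n d X + s • u) / (2 * n))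

section

variable {n d : ℕ} {X : Fin n → EuclideanSpace ℝ (Fin d)}

local notation "Θ" => interior (convexHull ℝ (Set.range X))

local notation "θ̃" => sampleMean n d X

lemma le_one_of_mem_Wset {θ : EuclideanSpace ℝ (Fin d)} {w : Fin n → ℝ}
    (hw : w ∈ Wset n d X θ) (i : Fin n) : w i ≤ 1 := by
  rw [← hw.2.1]
  exact Finset.single_le_sum (fun j _ => hw.1 j) (Finset.mem_univ i)

lemma convexCombo_mem_Wset {θ₀ θ₁ : EuclideanSpace ℝ (Fin d)} {w₀ w₁ : Fin n → ℝ}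
    (h₀ : w₀ ∈ Wset n d X θ₀) (h₁ : w₁ ∈ Wset n d X θ₁) {a b : ℝ}
    (ha : 0 ≤ a) (hb : 0 ≤ b) (hab : a + b = 1) :
    (fun i => a * w₀ i + b * w₁ i) ∈ Wset n d X (a • θ₀ + b • θ₁) := by
  refine ⟨fun i => by have := h₀.1 i; have := h₁.1 i; positivity, ?_, ?_⟩
  · simp only [Finset.sum_add_distrib, ← Finset.mul_sum, h₀.2.1, h₁.2.1, mul_one, hab]
  · simp only [add_smul, mul_smul, Finset.sum_add_distrib, ← Finset.smul_sum, h₀.2.2, h₁.2.2]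

lemma uniform_mem_Wset (hn : 0 < n) : (fun _ => (n : ℝ)⁻¹) ∈ Wset n d X θ̃ := by
  refine ⟨fun _ => by positivity, ?_, by simp [sampleMean, Finset.smul_sum]⟩
  simp [mul_inv_cancel₀ (Nat.cast_ne_zero.mpr hn.ne' : (n : ℝ) ≠ 0)]

lemma mem_convexHull_iff_Wset_nonempty {θ : EuclideanSpace ℝ (Fin d)} :
    θ ∈ convexHull ℝ (Set.range X) ↔ (Wset n d X θ).Nonempty := by
  refine ⟨fun h => convexHull_min (t := {θ | (Wset n d X θ).Nonempty}) ?_ ?_ h,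
    fun ⟨w, hw0, hw1, hθ⟩ => mem_convexHull_of_exists_fintype w X hw0 hw1 Set.mem_range_self hθ⟩
  · rintro _ ⟨i, rfl⟩
    exact ⟨Pi.single i 1, fun j => by by_cases h : j = i <;> simp [h],
      by simp, by simp [Pi.single_apply]⟩
  · rintro θ₀ ⟨w₀, h₀⟩ θ₁ ⟨w₁, h₁⟩ a b ha hb hab
    exact ⟨_, convexCombo_mem_Wset h₀ h₁ ha hb hab⟩

lemma isCompact_Wset (θ : EuclideanSpace ℝ (Fin d)) : IsCompact (Wset n d X θ) := by
  have hclosed : IsClosed (Wset n d X θ) := by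
    have hnonneg : IsClosed {w : Fin n → ℝ | ∀ i, 0 ≤ w i} := by
      simp only [Set.ofPred_forall]
      exact isClosed_iInter fun i => isClosed_le continuous_const (continuous_apply i)
    exact hnonneg.inter ((isClosed_eq (by fun_prop) continuous_const).inter
      (isClosed_eq (by fun_prop) continuous_const))
  exact (isCompact_Icc (a := 0) (b := 1)).of_isClosed_subset hclosed
    fun w hw => ⟨hw.1, le_one_of_mem_Wset hw⟩

lemma prod_mul_le_one_of_mem_Wset {θ : EuclideanSpace ℝ (Fin d)} {w : Fin n → ℝ}
    (hw : w ∈ Wset n d X θ) : ∏ i, (n : ℝ) * w i ≤ 1 :=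
  Real.prod_le_one_of_sum_eq_card (fun i => mul_nonneg n.cast_nonneg (hw.1 i))
    (by rw [← Finset.mul_sum, hw.2.1, mul_one, Fintype.card_fin])

lemma prod_mul_le_pow_mul_of_mem_Wset {θ : EuclideanSpace ℝ (Fin d)} {w : Fin n → ℝ}
    (hw : w ∈ Wset n d X θ) (j : Fin n) : ∏ i, (n : ℝ) * w i ≤ n ^ n * w j :=
  calc ∏ i, (n : ℝ) * w i ≤ ∏ i, (n : ℝ) * if i = j then w j else 1 := by
        refine Finset.prod_le_prod (fun i _ => mul_nonneg n.cast_nonneg (hw.1 i)) fun i _ =>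
          mul_le_mul_of_nonneg_left ?_ n.cast_nonneg
        split_ifs with h
        · rw [h]
        · exact le_one_of_mem_Wset hw i
    _ = n ^ n * w j := by
        rw [Finset.prod_mul_distrib, Finset.prod_ite_eq']
        simp

lemma elR_nonneg (θ : EuclideanSpace ℝ (Fin d)) : 0 ≤ elR n d X θ :=
  Real.sSup_nonneg <| by
    rintro _ ⟨w, hw, rfl⟩
    exact Finset.prod_nonneg fun i _ => mul_nonneg n.cast_nonneg (hw.1 i)

lemma elR_le_one (θ : EuclideanSpace ℝ (Fin d)) : elR n d X θ ≤ 1 :=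
  Real.sSup_le (by rintro _ ⟨w, hw, rfl⟩; exact prod_mul_le_one_of_mem_Wset hw) zero_le_one

lemma prod_mul_le_elR {θ : EuclideanSpace ℝ (Fin d)} {w : Fin n → ℝ} (hw : w ∈ Wset n d X θ) :
    ∏ i, (n : ℝ) * w i ≤ elR n d X θ :=
  le_csSup ⟨1, by rintro _ ⟨w, hw, rfl⟩; exact prod_mul_le_one_of_mem_Wset hw⟩ ⟨w, hw, rfl⟩

lemma exists_elR_eq_prod {θ : EuclideanSpace ℝ (Fin d)} (hθ : θ ∈ convexHull ℝ (Set.range X)) :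
    ∃ w ∈ Wset n d X θ, elR n d X θ = ∏ i, (n : ℝ) * w i := by
  obtain ⟨w, hw, hmax⟩ := (isCompact_Wset θ).exists_isMaxOn
    (mem_convexHull_iff_Wset_nonempty.mp hθ)
    (by fun_prop : Continuous fun w : Fin n → ℝ => ∏ i, (n : ℝ) * w i).continuousOn
  exact ⟨w, hw, IsGreatest.csSup_eq ⟨⟨w, hw, rfl⟩, by rintro _ ⟨v, hv, rfl⟩; exact hmax hv⟩⟩

lemma elR_sampleMean (hn : 0 < n) : elR n d X θ̃ = 1 :=
  (elR_le_one _).antisymm <| by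
    simpa [mul_inv_cancel₀ (Nat.cast_ne_zero.mpr hn.ne' : (n : ℝ) ≠ 0)] using
      prod_mul_le_elR (uniform_mem_Wset (X := X) hn)

lemma elln_nonneg (θ : EuclideanSpace ℝ (Fin d)) : 0 ≤ elln n d X θ := by
  have := Real.log_nonpos (elR_nonneg (X := X) θ) (elR_le_one θ)
  rw [elln]
  linarith

lemma elln_sampleMean (hn : 0 < n) : elln n d X θ̃ = 0 := by
  simp [elln, elR_sampleMean hn]

lemma sampleMean_mem_interior (hn : 0 < n) (hspan : (Θ).Nonempty) : θ̃ ∈ Θ := by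
  obtain ⟨p, hp⟩ := hspan
  obtain ⟨lam, hlam⟩ := mem_convexHull_iff_Wset_nonempty.mp (interior_subset hp)
  have hn1 : (1 : ℝ) ≤ n := Nat.one_le_cast.mpr hn
  -- `θ̃ = (2n)⁻¹ • p + (1 - (2n)⁻¹) • q`, where `q` has the weights `μ` below
  set μ : Fin n → ℝ := fun i => (2 - lam i) / (2 * n - 1)
  have hμ : μ ∈ Wset n d X (∑ i, μ i • X i) := by
    refine ⟨fun i => div_nonneg (by linarith [le_one_of_mem_Wset hlam i]) (by linarith), ?_, rfl⟩
    rw [← Finset.sum_div, Finset.sum_sub_distrib, hlam.2.1, Finset.sum_const, Finset.card_univ,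
      Fintype.card_fin, nsmul_eq_mul, mul_comm]
    exact div_self (by linarith)
  have hq := mem_convexHull_iff_Wset_nonempty.mpr ⟨μ, hμ⟩
  have ha : (0 : ℝ) < (2 * (n : ℝ))⁻¹ := by positivity
  have hb : (0 : ℝ) ≤ 1 - (2 * (n : ℝ))⁻¹ := by
    rw [sub_nonneg]; exact inv_le_one_of_one_le₀ (by linarith)
  have hcombo := convexCombo_mem_Wset hlam hμ ha.le hb (add_sub_cancel _ _)
  have huniform :
      (fun i => (2 * (n : ℝ))⁻¹ * lam i + (1 - (2 * (n : ℝ))⁻¹) * μ i) = fun _ => (n : ℝ)⁻¹ := by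
    funext i
    have : 2 * (n : ℝ) - 1 ≠ 0 := by linarith
    simp only [μ]
    field_simp
    ring
  rw [huniform] at hcombo
  rw [← hcombo.2.2.symm.trans (uniform_mem_Wset hn).2.2]
  exact (convex_convexHull ℝ _).combo_interior_self_mem_interior hp hq ha hb (add_sub_cancel _ _)

lemma exists_pos_mem_Wset (hn : 0 < n) {θ : EuclideanSpace ℝ (Fin d)} (hθ : θ ∈ Θ) :
    ∃ w ∈ Wset n d X θ, ∀ i, 0 < w i := by
  obtain ⟨t, ht, hmem⟩ := exists_pos_add_smul_mem_of_mem_interior hθ (θ - θ̃)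
  obtain ⟨lam, hlam⟩ := mem_convexHull_iff_Wset_nonempty.mp hmem
  have hcombo := convexCombo_mem_Wset hlam (uniform_mem_Wset hn) (a := (1 + t)⁻¹)
    (b := t / (1 + t)) (by positivity) (by positivity) (by field_simp)
  have hθ_eq : (1 + t)⁻¹ • (θ + t • (θ - θ̃)) + (t / (1 + t)) • θ̃ = θ := by
    match_scalars
    · field_simp
    · field_simp
      ring
  refine ⟨_, hθ_eq ▸ hcombo, fun i => ?_⟩
  have := hlam.1 i
  positivity

lemma elR_pos (hn : 0 < n) {θ : EuclideanSpace ℝ (Fin d)} (hθ : θ ∈ Θ) : 0 < elR n d X θ := by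
  obtain ⟨w, hw, hpos⟩ := exists_pos_mem_Wset hn hθ
  exact (Finset.prod_pos fun i _ => mul_pos (Nat.cast_pos.mpr hn) (hpos i)).trans_le
    (prod_mul_le_elR hw)

lemma elR_rpow_mul_rpow_le {θ₀ θ₁ : EuclideanSpace ℝ (Fin d)}
    (h₀ : θ₀ ∈ convexHull ℝ (Set.range X)) (h₁ : θ₁ ∈ convexHull ℝ (Set.range X))
    {a b : ℝ} (ha : 0 ≤ a) (hb : 0 ≤ b) (hab : a + b = 1) :
    elR n d X θ₀ ^ a * elR n d X θ₁ ^ b ≤ elR n d X (a • θ₀ + b • θ₁) := by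
  obtain ⟨w₀, hw₀, hR₀⟩ := exists_elR_eq_prod h₀
  obtain ⟨w₁, hw₁, hR₁⟩ := exists_elR_eq_prod h₁
  have hz₀ : ∀ i, 0 ≤ (n : ℝ) * w₀ i := fun i => mul_nonneg n.cast_nonneg (hw₀.1 i)
  have hz₁ : ∀ i, 0 ≤ (n : ℝ) * w₁ i := fun i => mul_nonneg n.cast_nonneg (hw₁.1 i)
  calc elR n d X θ₀ ^ a * elR n d X θ₁ ^ b
      = ∏ i, ((n : ℝ) * w₀ i) ^ a * ((n : ℝ) * w₁ i) ^ b := by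
        rw [hR₀, hR₁, ← Real.finsetProd_rpow _ _ (fun i _ => hz₀ i),
          ← Real.finsetProd_rpow _ _ (fun i _ => hz₁ i), ← Finset.prod_mul_distrib]
    _ ≤ ∏ i, (n : ℝ) * (a * w₀ i + b * w₁ i) :=
        Finset.prod_le_prod (fun i _ => by have := hz₀ i; have := hz₁ i; positivity)
          fun i _ => (Real.geom_mean_le_arith_mean2_weighted ha hb (hz₀ i) (hz₁ i) hab).trans_eq
            (by ring)
    _ ≤ elR n d X (a • θ₀ + b • θ₁) := prod_mul_le_elR (convexCombo_mem_Wset hw₀ hw₁ ha hb hab)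

lemma elln_convexOn (hn : 0 < n) : ConvexOn ℝ Θ (elln n d X) := by
  refine ⟨(convex_convexHull ℝ _).interior, fun x hx y hy a b ha hb hab => ?_⟩
  have hRx := elR_pos hn hx
  have hRy := elR_pos hn hy
  have hlog := Real.log_le_log (by positivity)
    (elR_rpow_mul_rpow_le (interior_subset hx) (interior_subset hy) ha hb hab)
  rw [Real.log_mul (by positivity) (by positivity), Real.log_rpow hRx, Real.log_rpow hRy] at hlog
  simp only [elln, smul_eq_mul]
  linarith

lemma elln_add_smul_le (hn : 0 < n) (hspan : (Θ).Nonempty) {u : EuclideanSpace ℝ (Fin d)}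
    {s t : ℝ} (hs : 0 ≤ s) (hst : s < t) (ht : θ̃ + t • u ∈ Θ) :
    t * elln n d X (θ̃ + s • u) ≤ s * elln n d X (θ̃ + t • u) := by
  have ht0 : 0 < t := hs.trans_lt hst
  have hconv := (elln_convexOn hn).2 (sampleMean_mem_interior hn hspan) ht
    (by rw [sub_nonneg, div_le_one ht0]; exact hst.le : 0 ≤ 1 - s / t)
    (by positivity : 0 ≤ s / t) (by ring)
  have hcombo : (1 - s / t) • θ̃ + (s / t) • (θ̃ + t • u) = θ̃ + s • u := by
    match_scalars
    · field_simp
      ring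
    · field_simp
  rw [hcombo, elln_sampleMean hn, smul_zero, zero_add, smul_eq_mul] at hconv
  calc t * elln n d X (θ̃ + s • u) ≤ t * (s / t * elln n d X (θ̃ + t • u)) :=
        mul_le_mul_of_nonneg_left hconv ht0.le
    _ = s * elln n d X (θ̃ + t • u) := by field_simp

lemma exists_supporting_functional (hspan : (Θ).Nonempty) {p : EuclideanSpace ℝ (Fin d)}
    (hp : p ∉ Θ) : ∃ (f : EuclideanSpace ℝ (Fin d) →L[ℝ] ℝ) (j : Fin n),
      (∀ i, f (X i) ≤ f p) ∧ f (X j) < f p := by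
  obtain ⟨f, hf⟩ :=
    geometric_hahn_banach_open_point (convex_convexHull ℝ _).interior isOpen_interior hp
  have hle : ∀ i, f (X i) ≤ f p := by
    intro i
    have hXi : X i ∈ closure Θ := by
      rw [(convex_convexHull ℝ _).closure_interior_eq_closure_of_nonempty_interior hspan]
      exact subset_closure (subset_convexHull ℝ _ (Set.mem_range_self i))
    exact closure_lt_subset_le f.continuous continuous_const (closure_mono hf hXi)
  obtain ⟨θ, hθ⟩ := hspan
  obtain ⟨w, hw⟩ := mem_convexHull_iff_Wset_nonempty.mp (interior_subset hθ)
  have hsum : ∑ i, w i * f (X i) < ∑ i, w i * f p := by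
    rw [← Finset.sum_mul, hw.2.1, one_mul]
    simpa [← hw.2.2] using hf θ hθ
  obtain ⟨j, -, hj⟩ := Finset.exists_lt_of_sum_lt hsum
  exact ⟨f, j, hle, lt_of_mul_lt_mul_left hj (hw.1 j)⟩

lemma elR_le_of_supporting {f : EuclideanSpace ℝ (Fin d) →L[ℝ] ℝ} {c : ℝ} {j : Fin n}
    (hle : ∀ i, f (X i) ≤ c) (hj : f (X j) < c) {θ : EuclideanSpace ℝ (Fin d)}
    (hθ : θ ∈ convexHull ℝ (Set.range X)) :
    elR n d X θ ≤ n ^ n * (c - f θ) / (c - f (X j)) := by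
  refine csSup_le ((mem_convexHull_iff_Wset_nonempty.mp hθ).image _) ?_
  rintro _ ⟨w, hw, rfl⟩
  have hwj : w j * (c - f (X j)) ≤ c - f θ :=
    calc w j * (c - f (X j)) ≤ ∑ i, w i * (c - f (X i)) :=
          Finset.single_le_sum (f := fun i => w i * (c - f (X i)))
            (fun i _ => mul_nonneg (hw.1 i) (sub_nonneg.mpr (hle i))) (Finset.mem_univ j)
      _ = c - f θ := by
          simp [mul_sub, Finset.sum_sub_distrib, ← Finset.sum_mul, hw.2.1, ← hw.2.2]
  rw [mul_div_assoc]
  exact (prod_mul_le_pow_mul_of_mem_Wset hw j).trans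
    (mul_le_mul_of_nonneg_left ((le_div_iff₀ (sub_pos.mpr hj)).mpr hwj) (by positivity))

lemma tendsto_elln_atTop_of_exit (hn : 0 < n) (hspan : (Θ).Nonempty)
    {u : EuclideanSpace ℝ (Fin d)} {b : ℝ} (hb : 0 < b) (hexit : θ̃ + b • u ∉ Θ)
    (hray : ∀ s ∈ Set.Ico 0 b, θ̃ + s • u ∈ Θ) :
    Tendsto (fun s => elln n d X (θ̃ + s • u)) (𝓝[<] b) atTop := by
  obtain ⟨f, j, hle, hj⟩ := exists_supporting_functional hspan hexit
  set bound : ℝ → ℝ := fun s => n ^ n * ((b - s) * f u) / (f (θ̃ + b • u) - f (X j))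
  have hR_le : ∀ s ∈ Set.Ico 0 b, elR n d X (θ̃ + s • u) ≤ bound s := by
    intro s hs
    convert elR_le_of_supporting hle hj (interior_subset (hray s hs)) using 3
    simp only [map_add, map_smul, smul_eq_mul]
    ring
  have hbound : Tendsto bound (𝓝[<] b) (𝓝 0) := by
    have : Continuous bound := by fun_prop
    simpa [bound] using (this.tendsto b).mono_left nhdsWithin_le_nhds
  have hIco : ∀ᶠ s in 𝓝[<] b, s ∈ Set.Ico 0 b := Ico_mem_nhdsLT hb
  have hR : Tendsto (fun s => elR n d X (θ̃ + s • u)) (𝓝[<] b) (𝓝[>] 0) :=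
    tendsto_nhdsWithin_iff.mpr
      ⟨squeeze_zero' (Eventually.of_forall fun s => elR_nonneg _) (hIco.mono hR_le) hbound,
        hIco.mono fun s hs => elR_pos hn (hray s hs)⟩
  exact (Real.tendsto_log_nhdsGT_zero.comp hR).const_mul_atBot_of_neg (by norm_num : (-2 : ℝ) < 0)

lemma csm_add_smul (u : EuclideanSpace ℝ (Fin d)) (s : ℝ) :
    csm n d X (θ̃ + s • u) = θ̃ + radialProfile n d X u s • u := by
  rw [csm, radialProfile, add_sub_cancel_left, smul_smul, mul_comm]

lemma radialProfile_strictMonoOn (hn : 0 < n) (hspan : (Θ).Nonempty)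
    (u : EuclideanSpace ℝ (Fin d)) :
    StrictMonoOn (radialProfile n d X u) {s | 0 ≤ s ∧ θ̃ + s • u ∈ Θ} := by
  rintro s ⟨hs, -⟩ t ⟨-, ht⟩ hst
  have ht0 : 0 < t := hs.trans_lt hst
  have hconv := elln_add_smul_le hn hspan hs hst ht
  have hl_t := elln_nonneg (X := X) (θ̃ + t • u)
  -- `t (s l_s) ≤ s (s l_t) ≤ t (t l_t)`, where `l_r = l(θ̃ + r • u)`
  have hprod : s * elln n d X (θ̃ + s • u) ≤ t * elln n d X (θ̃ + t • u) :=
    le_of_mul_le_mul_left (by nlinarith [mul_le_mul_of_nonneg_left hconv hs,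
      mul_le_mul_of_nonneg_right (mul_self_le_mul_self hs hst.le) hl_t]) ht0
  have h2n : (0 : ℝ) < 2 * n := by positivity
  have := div_le_div_of_nonneg_right hprod h2n.le
  simp only [radialProfile, mul_add, mul_one, mul_div_assoc'] at this ⊢
  linarith

lemma exists_radialProfile_eq_one {θ : EuclideanSpace ℝ (Fin d)} (hθ : θ ∈ Θ) :
    ∃ s, (0 ≤ s ∧ θ̃ + s • (csm n d X θ - θ̃) ∈ Θ) ∧ θ̃ + s • (csm n d X θ - θ̃) = θ ∧
      radialProfile n d X (csm n d X θ - θ̃) s = 1 := by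
  have hl := elln_nonneg (X := X) θ
  set c := 1 + elln n d X θ / (2 * n)
  have hc : 0 < c := by positivity
  have hθ_eq : θ̃ + c⁻¹ • (csm n d X θ - θ̃) = θ := by
    rw [csm, add_sub_cancel_left, smul_smul, inv_mul_cancel₀ hc.ne', one_smul, add_sub_cancel]
  refine ⟨c⁻¹, ⟨inv_nonneg.mpr hc.le, by rw [hθ_eq]; exact hθ⟩, hθ_eq, ?_⟩
  rw [radialProfile, hθ_eq, inv_mul_cancel₀ hc.ne']

lemma csm_injOn (hn : 0 < n) (hspan : (Θ).Nonempty) : Set.InjOn (csm n d X) Θ := by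
  intro x hx y hy hxy
  obtain ⟨s, hs, hxs, hφs⟩ := exists_radialProfile_eq_one hx
  obtain ⟨t, ht, hyt, hφt⟩ := exists_radialProfile_eq_one hy
  rw [hxy] at hs hxs hφs
  have hst : s = t := (radialProfile_strictMonoOn hn hspan _).injOn hs ht (hφs.trans hφt.symm)
  rw [← hxs, hst, hyt]

lemma exists_radialProfile_ge_one (hn : 0 < n) (hspan : (Θ).Nonempty)
    (u : EuclideanSpace ℝ (Fin d)) :
    ∃ s₁, 0 ≤ s₁ ∧ (∀ s ∈ Set.Icc 0 s₁, θ̃ + s • u ∈ Θ) ∧ 1 ≤ radialProfile n d X u s₁ := by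
  have hm := sampleMean_mem_interior hn hspan
  by_cases h1 : θ̃ + u ∈ Θ
  · refine ⟨1, zero_le_one, fun s hs => (convex_convexHull ℝ _).interior.add_smul_mem hm h1 hs, ?_⟩
    have := elln_nonneg (X := X) (θ̃ + (1 : ℝ) • u)
    rw [radialProfile, one_mul, le_add_iff_nonneg_right]
    positivity
  · obtain ⟨b, hb, hexit, hray⟩ := exists_first_exit isOpen_interior
      (by fun_prop : Continuous fun s : ℝ => θ̃ + s • u) (by simpa using hm) (by simpa using h1)
    have hnear : ∀ᶠ s in 𝓝[<] b, s ∈ Set.Ioo (b / 2) b := Ioo_mem_nhdsLT (half_lt_self hb)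
    obtain ⟨s, ⟨hs, hsb⟩, hls⟩ := (hnear.and
      ((tendsto_elln_atTop_of_exit hn hspan hb hexit hray).eventually_ge_atTop (4 * n / b))).exists
    refine ⟨s, by linarith, fun t ht => hray t ⟨ht.1, ht.2.trans_lt hsb⟩, ?_⟩
    have hl := elln_nonneg (X := X) (θ̃ + s • u)
    have hsl : 2 * n ≤ s * elln n d X (θ̃ + s • u) := by
      rw [div_le_iff₀ hb] at hls
      nlinarith
    calc (1 : ℝ) ≤ s * elln n d X (θ̃ + s • u) / (2 * n) := by
          rw [le_div_iff₀ (by positivity)]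
          linarith
      _ ≤ radialProfile n d X u s := by
          rw [radialProfile, mul_add, mul_one, mul_div_assoc]
          linarith

lemma csm_surjOn (hn : 0 < n) (hspan : (Θ).Nonempty) : Set.SurjOn (csm n d X) Θ Set.univ := by
  intro y _
  obtain ⟨s₁, hs₁, hray, hge⟩ := exists_radialProfile_ge_one hn hspan (y - θ̃)
  have hcont : ContinuousOn (radialProfile n d X (y - θ̃)) (Set.Icc 0 s₁) :=
    continuousOn_id.mul (continuousOn_const.add
      ((((elln_convexOn hn).continuousOn isOpen_interior).comp (by fun_prop) hray).div_const _))
  obtain ⟨s, hs, hφ⟩ := intermediate_value_Icc hs₁ hcont ⟨by simp [radialProfile], hge⟩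
  exact ⟨_, hray s hs, by rw [csm_add_smul, hφ, one_smul, add_sub_cancel]⟩

end

theorem stmt8_general (n d : ℕ) (hn : 0 < n)
    (X : Fin n → EuclideanSpace ℝ (Fin d))
    (hspan : (interior (convexHull ℝ (Set.range X))).Nonempty) :
    Set.BijOn (csm n d X) (interior (convexHull ℝ (Set.range X))) Set.univ :=
  ⟨Set.mapsTo_univ _ _, csm_injOn hn hspan, csm_surjOn hn hspan⟩

/-- Theorem 1(iii): The composite similarity mapping `h` is a bijection
from `Θₙ` onto all of `ℝᵈ`. -/
theorem stmt8 (n d : ℕ) (hn : 0 < n) (hd : 0 < d)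
    (X : Fin n → EuclideanSpace ℝ (Fin d))
    (hspan : (interior (convexHull ℝ (Set.range X))).Nonempty) :
    Set.BijOn (csm n d X) (interior (convexHull ℝ (Set.range X))) Set.univ :=
  stmt8_general n d hn X hspan
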